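/- Let ν be a Borel probability measure on [0,1] with ∫₀¹ x/(1−x) dν(x) < ∞, let (X_i)_{i≥1} be i.i.d. random variables with law ν, write X̄_m = (X₁+⋯+X_m)/m and μ = ∫₀¹ x dν(x). Then lim_{m→∞} E[X̄_m/(1−X̄_m)] = μ/(1−μ). -/

import Mathlib

open MeasureTheory ProbabilityTheory Filter
open scoped ENNReal

/-- The "condensation integral" `E[X̄_m / (1 - X̄_m)]`, computed in `[0,∞]`
(with the convention `x/(1-x) = ∞` when `x = 1`, realised via `ℝ≥0∞` division),
where `X̄_m = (X₁ + ⋯ + X_m)/m`. -/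
noncomputable def meanRatioInt {Ω : Type*} [MeasurableSpace Ω] (μ : Measure Ω)
    (X : ℕ → Ω → ℝ) (m : ℕ) : ℝ≥0∞ :=
  ∫⁻ ω, ENNReal.ofReal ((∑ i ∈ Finset.range m, X i ω) / m) /
    ENNReal.ofReal (1 - (∑ i ∈ Finset.range m, X i ω) / m) ∂μ

/-!
By the strong law of large numbers `X̄_m → μ` almost surely, so the integrand `X̄_m / (1 - X̄_m)`
converges almost surely to `μ / (1 - μ)`. Since `t ↦ t / (1 - t)` is convex on `(-∞, 1)`, Jensen's
inequality bounds the integrand by the empirical mean of the `Xᵢ / (1 - Xᵢ)`, which converges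
almost surely (strong law again) and whose expectation is the constant `∫ x / (1 - x) dν`.
Pratt's lemma, dominated convergence with dominating functions converging in mean, concludes.
-/

open Set
open scoped Finset Topology

lemma convexOn_div_one_sub : ConvexOn ℝ (Iio 1) fun t : ℝ => t / (1 - t) := by
  let g : ℝ →ᵃ[ℝ] ℝ := AffineMap.const ℝ ℝ 1 - AffineMap.id ℝ ℝ
  have hg : g ⁻¹' Ioi 0 = Iio 1 := by ext t; simp [g]
  have hinv := (convexOn_zpow (𝕜 := ℝ) (-1)).comp_affineMap g
  rw [hg] at hinv
  refine (hinv.add_const (-1)).congr fun t ht => ?_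
  have : (1 : ℝ) - t ≠ 0 := (sub_pos.2 ht).ne'
  change (1 - t) ^ (-1 : ℤ) + -1 = t / (1 - t)
  rw [zpow_neg_one]
  field_simp
  ring

lemma div_one_sub_average_le {ι : Type*} {s : Finset ι} (hs : s.Nonempty) {x : ι → ℝ}
    (hx : ∀ i ∈ s, x i < 1) :
    (∑ i ∈ s, x i) / #s / (1 - (∑ i ∈ s, x i) / #s) ≤ (∑ i ∈ s, x i / (1 - x i)) / #s := by
  have hcard : (0 : ℝ) < #s := by exact_mod_cast hs.card_pos
  have h := convexOn_div_one_sub.map_sum_le (t := s) (w := fun _ => (#s : ℝ)⁻¹) (p := x)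
    (fun _ _ => by positivity) (by simp [hcard.ne']) hx
  simpa only [smul_eq_mul, inv_mul_eq_div, Finset.sum_div] using h

lemma tendsto_ofReal_div_ofReal_one_sub {β : Type*} {l : Filter β} {u : β → ℝ} {a : ℝ}
    (hu : Tendsto u l (𝓝 a)) (ha : a < 1) :
    Tendsto (fun n => ENNReal.ofReal (u n) / ENNReal.ofReal (1 - u n)) l
      (𝓝 (ENNReal.ofReal (a / (1 - a)))) := by
  have hev : ∀ᶠ n in l, ENNReal.ofReal (u n / (1 - u n)) =
      ENNReal.ofReal (u n) / ENNReal.ofReal (1 - u n) :=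
    (hu.eventually (gt_mem_nhds ha)).mono fun n hn => ENNReal.ofReal_div_of_pos (sub_pos.2 hn)
  exact (ENNReal.tendsto_ofReal (hu.div (tendsto_const_nhds.sub hu) (sub_pos.2 ha).ne')).congr' hev

lemma ofReal_average_div_le (m : ℕ) {x : ℕ → ℝ} (hx : ∀ i ∈ Finset.range m, x i < 1) :
    ENNReal.ofReal ((∑ i ∈ Finset.range m, x i) / m) /
        ENNReal.ofReal (1 - (∑ i ∈ Finset.range m, x i) / m) ≤
      ENNReal.ofReal ((∑ i ∈ Finset.range m, x i / (1 - x i)) / m) := by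
  rcases Nat.eq_zero_or_pos m with rfl | hm
  · simp
  have hne : (Finset.range m).Nonempty := Finset.nonempty_range_iff.2 hm.ne'
  have hlt : (∑ i ∈ Finset.range m, x i) / m < 1 := by
    rw [div_lt_one (Nat.cast_pos.2 hm)]
    simpa using Finset.sum_lt_sum_of_nonempty hne hx
  rw [← ENNReal.ofReal_div_of_pos (sub_pos.2 hlt)]
  exact ENNReal.ofReal_le_ofReal (by simpa using div_one_sub_average_le hne hx)

-- Pratt's lemma.
theorem tendsto_lintegral_of_le_of_lintegral_eq {α : Type*} [MeasurableSpace α] {μ : Measure α}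
    {f h : ℕ → α → ℝ≥0∞} {F H : α → ℝ≥0∞}
    (hf_meas : ∀ n, AEMeasurable (f n) μ) (hh_meas : ∀ n, AEMeasurable (h n) μ)
    (hfh : ∀ n, f n ≤ᵐ[μ] h n)
    (hf : ∀ᵐ a ∂μ, Tendsto (fun n => f n a) atTop (𝓝 (F a)))
    (hh : ∀ᵐ a ∂μ, Tendsto (fun n => h n a) atTop (𝓝 (H a)))
    (hH : ∫⁻ a, H a ∂μ ≠ ∞) (h_int : ∀ᶠ n in atTop, ∫⁻ a, h n a ∂μ = ∫⁻ a, H a ∂μ) :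
    Tendsto (fun n => ∫⁻ a, f n a ∂μ) atTop (𝓝 (∫⁻ a, F a ∂μ)) := by
  set C := ∫⁻ a, H a ∂μ
  have hF_meas : AEMeasurable F μ := aemeasurable_of_tendsto_metrizable_ae atTop hf_meas hf
  have hH_meas : AEMeasurable H μ := aemeasurable_of_tendsto_metrizable_ae atTop hh_meas hh
  have hFH : F ≤ᵐ[μ] H := by
    filter_upwards [hf, hh, ae_all_iff.2 hfh] with a hfa hha hfha
    exact le_of_tendsto_of_tendsto' hfa hha hfha
  have hF_ne_top : ∫⁻ a, F a ∂μ ≠ ∞ := ne_top_of_le_ne_top hH (lintegral_mono_ae hFH)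
  have hf_int : ∀ᶠ n in atTop, ∫⁻ a, f n a ∂μ ≤ C :=
    h_int.mono fun n hn => hn ▸ lintegral_mono_ae (hfh n)
  have h_lower : ∫⁻ a, F a ∂μ ≤ liminf (fun n => ∫⁻ a, f n a ∂μ) atTop :=
    calc ∫⁻ a, F a ∂μ = ∫⁻ a, liminf (fun n => f n a) atTop ∂μ :=
          lintegral_congr_ae (hf.mono fun a ha => ha.liminf_eq.symm)
      _ ≤ _ := lintegral_liminf_le' hf_meas
  -- Fatou's lemma applied to `h n - f n` bounds the limsup from above.
  have h_upper : C - ∫⁻ a, F a ∂μ ≤ C - limsup (fun n => ∫⁻ a, f n a ∂μ) atTop :=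
    calc C - ∫⁻ a, F a ∂μ = ∫⁻ a, (H a - F a) ∂μ := (lintegral_sub' hF_meas hF_ne_top hFH).symm
      _ = ∫⁻ a, liminf (fun n => h n a - f n a) atTop ∂μ := by
          refine lintegral_congr_ae ?_
          filter_upwards [hf, hh, ae_lt_top' hH_meas hH] with a hfa hha hHa
          exact (ENNReal.Tendsto.sub hha hfa (Or.inl hHa.ne)).liminf_eq.symm
      _ ≤ liminf (fun n => ∫⁻ a, (h n a - f n a) ∂μ) atTop :=
          lintegral_liminf_le' fun n => (hh_meas n).sub (hf_meas n)
      _ = C - limsup (fun n => ∫⁻ a, f n a ∂μ) atTop := by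
          rw [← ENNReal.liminf_const_sub _ _ hH]
          refine liminf_congr ?_
          filter_upwards [h_int, hf_int] with n hn hfn
          rw [lintegral_sub' (hf_meas n) (ne_top_of_le_ne_top hH hfn) (hfh n), hn]
  refine tendsto_of_le_liminf_of_limsup_le h_lower ?_
  refine (ENNReal.sub_le_sub_iff_left ?_ hH).1 h_upper
  exact limsup_le_of_le (by isBoundedDefault) hf_int

section IdentDistrib

variable {Ω : Type*} [MeasurableSpace Ω] {μ : Measure Ω} {ν : Measure ℝ} {X : ℕ → Ω → ℝ}

lemma strong_law_ae_comp_of_map_eq (hX : ∀ i, AEMeasurable (X i) μ) (hindep : iIndepFun X μ)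
    (hlaw : ∀ i, μ.map (X i) = ν) {g : ℝ → ℝ} (hg : Measurable g) (hgi : Integrable g ν) :
    ∀ᵐ ω ∂μ, Tendsto (fun n : ℕ => (∑ i ∈ Finset.range n, g (X i ω)) / n) atTop
      (𝓝 (∫ x, g x ∂ν)) := by
  have hident : ∀ i, IdentDistrib (fun ω => g (X i ω)) (fun ω => g (X 0 ω)) μ μ := fun i =>
    (IdentDistrib.mk (hX i) (hX 0) (by rw [hlaw i, hlaw 0])).comp hg
  have hint : Integrable (fun ω => g (X 0 ω)) μ := (hlaw 0 ▸ hgi).comp_aemeasurable (hX 0)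
  have hmean : ∫ ω, g (X 0 ω) ∂μ = ∫ x, g x ∂ν := by
    rw [← hlaw 0, integral_map (hX 0) (hlaw 0 ▸ hgi.aestronglyMeasurable)]
  simpa only [hmean] using strong_law_ae_real (fun i ω => g (X i ω)) hint
    (fun i j hij => (hindep.indepFun hij).comp hg hg) hident

lemma lintegral_ofReal_average_comp_of_map_eq (hX : ∀ i, AEMeasurable (X i) μ)
    (hlaw : ∀ i, μ.map (X i) = ν) {g : ℝ → ℝ} (hgi : Integrable g ν) (hg0 : 0 ≤ᵐ[ν] g)
    {m : ℕ} (hm : m ≠ 0) :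
    ∫⁻ ω, ENNReal.ofReal ((∑ i ∈ Finset.range m, g (X i ω)) / m) ∂μ =
      ENNReal.ofReal (∫ x, g x ∂ν) := by
  have hint : ∀ i, Integrable (fun ω => g (X i ω)) μ := fun i =>
    (hlaw i ▸ hgi).comp_aemeasurable (hX i)
  have hmean : ∀ i, ∫ ω, g (X i ω) ∂μ = ∫ x, g x ∂ν := fun i => by
    rw [← hlaw i, integral_map (hX i) (hlaw i ▸ hgi.aestronglyMeasurable)]
  have hnonneg : ∀ i, 0 ≤ᵐ[μ] fun ω => g (X i ω) := fun i =>
    ae_of_ae_map (p := fun y => 0 ≤ g y) (hX i) (hlaw i ▸ hg0)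
  have hsum_nonneg : 0 ≤ᵐ[μ] fun ω => (∑ i ∈ Finset.range m, g (X i ω)) / m := by
    filter_upwards [ae_all_iff.2 hnonneg] with ω hω
    exact div_nonneg (Finset.sum_nonneg fun i _ => hω i) m.cast_nonneg
  rw [← ofReal_integral_eq_lintegral_ofReal ((integrable_finsetSum _ fun i _ => hint i).div_const _)
    hsum_nonneg, integral_div, integral_finsetSum _ fun i _ => hint i,
    Finset.sum_congr rfl fun i _ => hmean i, Finset.sum_const, Finset.card_range, nsmul_eq_mul,
    mul_div_cancel_left₀ _ (Nat.cast_ne_zero.2 hm)]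

end IdentDistrib

section UnitInterval

variable {ν : Measure ℝ}

lemma measure_singleton_one_eq_zero_of_lintegral_ne_top
    (h : ∫⁻ x, ENNReal.ofReal x / ENNReal.ofReal (1 - x) ∂ν ≠ ∞) : ν {1} = 0 := by
  by_contra hne
  refine h (top_le_iff.1 ?_)
  calc ∞ = ∫⁻ x in {1}, ENNReal.ofReal x / ENNReal.ofReal (1 - x) ∂ν := by
        simp [ENNReal.mul_top hne]
    _ ≤ _ := setLIntegral_le_lintegral _ _

lemma ae_mem_Ico_of_lintegral_ne_top (hsupp : ν (Icc 0 1)ᶜ = 0)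
    (h : ∫⁻ x, ENNReal.ofReal x / ENNReal.ofReal (1 - x) ∂ν ≠ ∞) :
    ∀ᵐ x ∂ν, x ∈ Ico (0 : ℝ) 1 := by
  filter_upwards [(ae_iff.2 hsupp : ∀ᵐ x ∂ν, x ∈ Icc (0 : ℝ) 1),
    measure_eq_zero_iff_ae_notMem.1 (measure_singleton_one_eq_zero_of_lintegral_ne_top h)]
    with x hx h1
  exact ⟨hx.1, lt_of_le_of_ne hx.2 h1⟩

lemma integrable_div_one_sub (hν : ∀ᵐ x ∂ν, x ∈ Ico (0 : ℝ) 1)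
    (h : ∫⁻ x, ENNReal.ofReal x / ENNReal.ofReal (1 - x) ∂ν < ∞) :
    Integrable (fun x : ℝ => x / (1 - x)) ν := by
  refine ⟨Measurable.aestronglyMeasurable (by fun_prop), ?_⟩
  rw [hasFiniteIntegral_iff_ofReal (hν.mono fun x hx => div_nonneg hx.1 (sub_nonneg.2 hx.2.le))]
  refine lt_of_eq_of_lt (lintegral_congr_ae ?_) h
  filter_upwards [hν] with x hx
  exact ENNReal.ofReal_div_of_pos (sub_pos.2 hx.2)

lemma integral_lt_one_of_ae_lt_one [IsProbabilityMeasure ν] (hν : ∀ᵐ x ∂ν, x < 1)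
    (hi : Integrable (fun x : ℝ => x) ν) : ∫ x, x ∂ν < 1 := by
  have hpos : 0 < ∫ x, (1 - x) ∂ν := by
    rw [integral_pos_iff_support_of_nonneg_ae (hν.mono fun x hx => (sub_pos.2 hx).le)
      ((integrable_const 1).sub hi)]
    refine pos_iff_ne_zero.2 fun h0 => ?_
    obtain ⟨x, hx, hx0⟩ := (hν.and (measure_eq_zero_iff_ae_notMem.1 h0)).exists
    rw [Function.notMem_support] at hx0
    linarith
  rw [integral_sub (integrable_const 1) hi] at hpos
  simpa using hpos

end UnitInterval

/-- If `∫₀¹ x/(1-x) dν(x) < ∞` then, with `μ_ε = ∫₀¹ x dν(x)`,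
`lim_{m→∞} E[X̄_m/(1-X̄_m)] = μ_ε/(1-μ_ε)`. -/
theorem meanRatioInt_tendsto
    {Ω : Type*} [MeasurableSpace Ω] (μ : Measure Ω) [IsProbabilityMeasure μ]
    (ν : Measure ℝ) [IsProbabilityMeasure ν]
    (X : ℕ → Ω → ℝ) (hmeas : ∀ i, Measurable (X i))
    (hindep : iIndepFun X μ)
    (hlaw : ∀ i, μ.map (X i) = ν)
    (hsupp : ν (Set.Icc (0:ℝ) 1)ᶜ = 0)
    (hint : (∫⁻ x, ENNReal.ofReal x / ENNReal.ofReal (1 - x) ∂ν) < ⊤) :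
    Tendsto (fun m => meanRatioInt μ X m) atTop
      (nhds (ENNReal.ofReal ((∫ x, x ∂ν) / (1 - ∫ x, x ∂ν)))) := by
  have hX : ∀ i, AEMeasurable (X i) μ := fun i => (hmeas i).aemeasurable
  have hν := ae_mem_Ico_of_lintegral_ne_top hsupp hint.ne
  have hX_lt : ∀ᵐ ω ∂μ, ∀ i, X i ω < 1 := ae_all_iff.2 fun i =>
    ae_of_ae_map (p := fun x => x < 1) (hX i) (hlaw i ▸ hν.mono fun x hx => hx.2)
  have hratio_int := integrable_div_one_sub hν hint
  have hid_int : Integrable (fun x : ℝ => x) ν :=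
    Integrable.of_mem_Icc 0 1 aemeasurable_id (hν.mono fun x hx => Ico_subset_Icc_self hx)
  have hmean_lt := integral_lt_one_of_ae_lt_one (hν.mono fun x hx => hx.2) hid_int
  have key := tendsto_lintegral_of_le_of_lintegral_eq (μ := μ)
    (h := fun m ω => ENNReal.ofReal ((∑ i ∈ Finset.range m, X i ω / (1 - X i ω)) / m))
    (H := fun _ => ENNReal.ofReal (∫ x, x / (1 - x) ∂ν))
    (fun m => by fun_prop) (fun m => by fun_prop)
    (fun m => hX_lt.mono fun ω hω => ofReal_average_div_le m fun i _ => hω i)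
    ((strong_law_ae_comp_of_map_eq hX hindep hlaw measurable_id' hid_int).mono
      fun ω hω => tendsto_ofReal_div_ofReal_one_sub hω hmean_lt)
    ((strong_law_ae_comp_of_map_eq hX hindep hlaw (by fun_prop) hratio_int).mono
      fun ω hω => ENNReal.tendsto_ofReal hω)
    (by simp)
    ((eventually_ne_atTop 0).mono fun m hm => by
      rw [lintegral_ofReal_average_comp_of_map_eq hX hlaw hratio_int
        (hν.mono fun x hx => div_nonneg hx.1 (sub_nonneg.2 hx.2.le)) hm]
      simp)
  simpa only [meanRatioInt, lintegral_const, measure_univ, mul_one] using key
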